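/- On ℝ⁶ with coordinates (γ₁,γ₂,γ₃,M₁,M₂,M₃), define the antisymmetric matrix field P₄ by its upper-triangular entries: (1,2) ↦ −γ₁M₁−γ₂M₂, (1,3) ↦ −γ₂M₃, (1,4) ↦ M₁M₂, (1,5) ↦ −M₁², (1,6) ↦ −aγ₂, (2,3) ↦ γ₁M₃, (2,4) ↦ M₂², (2,5) ↦ −M₁M₂, (2,6) ↦ aγ₁, (3,4) ↦ M₂M₃, (3,5) ↦ −M₁M₃, (3,6) ↦ 0, (4,5) ↦ 0, (4,6) ↦ −aM₂, (5,6) ↦ aM₁. Then for the Lagrange vector field X = (2(γ₃M₂−γ₂M₃), 2(γ₁M₃−γ₃M₁), 2(γ₂M₁−γ₁M₂), −aγ₂, aγ₁, 0), the first integrals f₁ = γ₁²+γ₂²+γ₃², f₂ = γ₁M₁+γ₂M₂+γ₃M₃, f₃ = M₁²+M₂²+M₃²+aγ₃, f₄ = M₃, and Y = (−γ₂, γ₁, 0, −M₂, M₁, 0): (a) L_X P₄ = 0, where (L_X P)_{ij} = ∑_k ( X_k ∂P_{ij}/∂x_k − P_{kj} ∂X_i/∂x_k − P_{ik} ∂X_j/∂x_k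 ); (b) P₄ satisfies the Jacobi identity ∑_l ( P_{li} ∂P_{jk}/∂x_l + P_{lj} ∂P_{ki}/∂x_l + P_{lk} ∂P_{ij}/∂x_l ) = 0; (c) P₄∇f₁ = 2f₂·Y, P₄∇f₂ = f₃·Y, P₄∇f₃ = 3a f₄·Y, and P₄∇f₄ = a·Y at every point, where (P∇f)_i = ∑_j P_{ij} ∂f/∂x_j. -/

import Mathlib

/-! All entries of `lagX`, `lagP₄` and the first integrals are polynomials, so every claim becomes a
polynomial identity once the partial derivatives are expanded by the sum, product and power rules.
The Jacobiator of an antisymmetric matrix field is totally antisymmetric in its three indices, so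
the Jacobi identity only has to be checked for `i < j < k`. -/

noncomputable section

open scoped BigOperators

/-- Partial derivative of `f` in the `i`-th coordinate direction at `x`. -/
def pd {n : ℕ} (i : Fin n) (f : (Fin n → ℝ) → ℝ) (x : Fin n → ℝ) : ℝ :=
  fderiv ℝ f x (Pi.single i 1)

/-- The Lagrange vector field on `ℝ⁶` with coordinates
`(x₁,…,x₆) = (γ₁,γ₂,γ₃,M₁,M₂,M₃)`. -/
def lagX (a : ℝ) (x : Fin 6 → ℝ) : Fin 6 → ℝ :=
  ![2 * (x 2 * x 4 - x 1 * x 5), 2 * (x 0 * x 5 - x 2 * x 3),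
    2 * (x 1 * x 3 - x 0 * x 4), -(a * x 1), a * x 0, 0]

/-- `f₁ = γ₁² + γ₂² + γ₃²`. -/
def lagF₁ (x : Fin 6 → ℝ) : ℝ := x 0 ^ 2 + x 1 ^ 2 + x 2 ^ 2

/-- `f₂ = γ₁M₁ + γ₂M₂ + γ₃M₃`. -/
def lagF₂ (x : Fin 6 → ℝ) : ℝ := x 0 * x 3 + x 1 * x 4 + x 2 * x 5

/-- `f₃ = M₁² + M₂² + M₃² + aγ₃`. -/
def lagF₃ (a : ℝ) (x : Fin 6 → ℝ) : ℝ := x 3 ^ 2 + x 4 ^ 2 + x 5 ^ 2 + a * x 2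

/-- `f₄ = M₃`. -/
def lagF₄ (x : Fin 6 → ℝ) : ℝ := x 5

/-- Contraction of a matrix field with the gradient of a function:
`(P∇f)_i = ∑_j P_{ij} ∂f/∂x_j`. -/
def Pgrad {n : ℕ} (P : (Fin n → ℝ) → Matrix (Fin n) (Fin n) ℝ)
    (f : (Fin n → ℝ) → ℝ) (x : Fin n → ℝ) (i : Fin n) : ℝ :=
  ∑ j, P x i j * pd j f x

/-- Lie derivative of a (2,0) tensor (matrix field) `P` along the vector field `X`:
`(L_X P)_{ij} = ∑_k (X_k ∂P_{ij}/∂x_k − P_{kj} ∂X_i/∂x_k − P_{ik} ∂X_j/∂x_k)`. -/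
def matLie {n : ℕ} (X : (Fin n → ℝ) → Fin n → ℝ)
    (P : (Fin n → ℝ) → Matrix (Fin n) (Fin n) ℝ) (x : Fin n → ℝ) (i j : Fin n) : ℝ :=
  ∑ k, (X x k * pd k (fun y => P y i j) x - P x k j * pd k (fun y => X y i) x
        - P x i k * pd k (fun y => X y j) x)

/-- The Jacobiator of an antisymmetric matrix field; it vanishes identically iff `P`
satisfies the Jacobi identity (i.e. is a Poisson bivector). -/
def jacobiator {n : ℕ} (P : (Fin n → ℝ) → Matrix (Fin n) (Fin n) ℝ)
    (x : Fin n → ℝ) (i j k : Fin n) : ℝ :=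
  ∑ l, (P x l i * pd l (fun y => P y j k) x + P x l j * pd l (fun y => P y k i) x
        + P x l k * pd l (fun y => P y i j) x)

/-- The vector field `Y = (−γ₂, γ₁, 0, −M₂, M₁, 0)`. -/
def lagY (x : Fin 6 → ℝ) : Fin 6 → ℝ :=
  ![-(x 1), x 0, 0, -(x 4), x 3, 0]

/-- The invariant Poisson bivector `P₄` of the Lagrange case. -/
def lagP₄ (a : ℝ) (x : Fin 6 → ℝ) : Matrix (Fin 6) (Fin 6) ℝ :=
  !![0, -(x 0 * x 3) - x 1 * x 4, -(x 1 * x 5), x 3 * x 4, -(x 3 ^ 2), -(a * x 1);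
     x 0 * x 3 + x 1 * x 4, 0, x 0 * x 5, x 4 ^ 2, -(x 3 * x 4), a * x 0;
     x 1 * x 5, -(x 0 * x 5), 0, x 4 * x 5, -(x 3 * x 5), 0;
     -(x 3 * x 4), -(x 4 ^ 2), -(x 4 * x 5), 0, 0, -(a * x 4);
     x 3 ^ 2, x 3 * x 4, x 3 * x 5, 0, 0, a * x 3;
     a * x 1, -(a * x 0), 0, a * x 4, -(a * x 3), 0]

open scoped Matrix

section PartialDerivative

variable {n : ℕ} (i : Fin n) {f g : (Fin n → ℝ) → ℝ} {x : Fin n → ℝ}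

theorem pd_const (c : ℝ) : pd i (fun _ => c) x = 0 := by
  simp [pd]

theorem pd_coord (j : Fin n) : pd i (fun y => y j) x = if j = i then 1 else 0 := by
  simp [pd, Pi.single_apply, fderiv_apply]

theorem pd_add (hf : DifferentiableAt ℝ f x) (hg : DifferentiableAt ℝ g x) :
    pd i (fun y => f y + g y) x = pd i f x + pd i g x := by
  simp [pd, fderiv_fun_add hf hg]

theorem pd_sub (hf : DifferentiableAt ℝ f x) (hg : DifferentiableAt ℝ g x) :
    pd i (fun y => f y - g y) x = pd i f x - pd i g x := by
  simp [pd, fderiv_fun_sub hf hg]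

theorem pd_neg : pd i (fun y => -f y) x = -pd i f x := by
  simp [pd]

theorem pd_mul (hf : DifferentiableAt ℝ f x) (hg : DifferentiableAt ℝ g x) :
    pd i (fun y => f y * g y) x = pd i f x * g x + f x * pd i g x := by
  simp [pd, fderiv_fun_mul hf hg]
  ring

theorem pd_pow (hf : DifferentiableAt ℝ f x) (m : ℕ) :
    pd i (fun y => f y ^ m) x = m * f x ^ (m - 1) * pd i f x := by
  simp [pd, fderiv_fun_pow m hf]

end PartialDerivative

section Jacobiator

variable {n : ℕ} {P : (Fin n → ℝ) → Matrix (Fin n) (Fin n) ℝ} (x : Fin n → ℝ)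

theorem jacobiator_rotate (i j k : Fin n) : jacobiator P x j k i = jacobiator P x i j k :=
  Finset.sum_congr rfl fun _ _ => by ring

theorem pd_entry_swap (hP : ∀ y, (P y)ᵀ = -P y) (l i j : Fin n) :
    pd l (fun y => P y j i) x = -pd l (fun y => P y i j) x := by
  have hP' : (fun y => P y j i) = fun y => -P y i j :=
    funext fun y => by simpa using congrFun (congrFun (hP y) i) j
  rw [hP', pd_neg]

theorem jacobiator_swap (hP : ∀ y, (P y)ᵀ = -P y) (i j k : Fin n) :
    jacobiator P x j i k = -jacobiator P x i j k := by
  unfold jacobiator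
  rw [← Finset.sum_neg_distrib]
  refine Finset.sum_congr rfl fun l _ => ?_
  rw [pd_entry_swap x hP l k i, pd_entry_swap x hP l j k,
    pd_entry_swap x hP l i j]
  ring

theorem jacobiator_eq_zero_of_lt (hP : ∀ y, (P y)ᵀ = -P y)
    (h : ∀ i j k, i < j → j < k → jacobiator P x i j k = 0) (i j k : Fin n) :
    jacobiator P x i j k = 0 := by
  have rot := jacobiator_rotate (P := P) x
  have swap := jacobiator_swap x hP
  have self_left : ∀ i k, jacobiator P x i i k = 0 := fun i k => by linarith [swap i i k]
  wlog hij : i < j generalizing i j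
  · rcases (not_lt.1 hij).lt_or_eq with hji | rfl
    · linarith [swap j i k, this j i hji]
    · exact self_left _ k
  rcases lt_trichotomy j k with hjk | rfl | hkj
  · exact h i j k hij hjk
  · linarith [rot i j j, self_left j i]
  rcases lt_trichotomy i k with hik | rfl | hki
  · linarith [rot i j k, rot j k i, swap i k j, h i k j hik hkj]
  · linarith [rot i j i, rot j i i, self_left i j]
  · linarith [rot i j k, rot j k i, h k i j hki hij]

end Jacobiator

theorem Pgrad_lagP₄_first_integrals (a : ℝ) (x : Fin 6 → ℝ) (i : Fin 6) :
    Pgrad (lagP₄ a) lagF₁ x i = 2 * lagF₂ x * lagY x i ∧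
    Pgrad (lagP₄ a) lagF₂ x i = lagF₃ a x * lagY x i ∧
    Pgrad (lagP₄ a) (lagF₃ a) x i = 3 * a * lagF₄ x * lagY x i ∧
    Pgrad (lagP₄ a) lagF₄ x i = a * lagY x i := by
  unfold lagF₁ lagF₂ lagF₃ lagF₄
  fin_cases i <;> refine ⟨?_, ?_, ?_, ?_⟩ <;>
  · simp (disch := fun_prop) only [Pgrad, lagP₄, lagY, Fin.sum_univ_six, Matrix.of_apply,
      Matrix.cons_val, Fin.reduceFinMk, Fin.isValue, pd_add, pd_mul, pd_pow, pd_coord, pd_const,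
      Fin.reduceEq, reduceIte]
    ring

theorem matLie_lagX_lagP₄ (a : ℝ) (x : Fin 6 → ℝ) (i j : Fin 6) :
    matLie (lagX a) (lagP₄ a) x i j = 0 := by
  fin_cases i <;> fin_cases j <;>
  · simp (disch := fun_prop) only [matLie, lagX, lagP₄, Fin.sum_univ_six, Matrix.of_apply,
      Matrix.cons_val, Fin.reduceFinMk, Fin.isValue, pd_add, pd_sub, pd_neg, pd_mul, pd_pow,
      pd_coord, pd_const, Fin.reduceEq, reduceIte]
    ring

theorem lagP₄_transpose (a : ℝ) (x : Fin 6 → ℝ) : (lagP₄ a x)ᵀ = -lagP₄ a x := by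
  ext i j
  fin_cases i <;> fin_cases j <;> simp [lagP₄] <;> ring

theorem jacobiator_lagP₄ (a : ℝ) (x : Fin 6 → ℝ) (i j k : Fin 6) :
    jacobiator (lagP₄ a) x i j k = 0 := by
  refine jacobiator_eq_zero_of_lt x (lagP₄_transpose a) (fun i j k hij hjk => ?_) i j k
  fin_cases i <;> fin_cases j <;> fin_cases k <;> try omega
  all_goals
  · simp (disch := fun_prop) only [jacobiator, lagP₄, Fin.sum_univ_six, Matrix.of_apply,
      Matrix.cons_val, Fin.reduceFinMk, Fin.isValue, pd_add, pd_sub, pd_neg, pd_mul, pd_pow,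
      pd_coord, pd_const, Fin.reduceEq, reduceIte]
    ring

/-- Properties of the invariant Poisson bivector `P₄` of the Lagrange case:
(a) `L_X P₄ = 0`; (b) `P₄` satisfies the Jacobi identity;
(c) `P₄∇f₁ = 2f₂·Y`, `P₄∇f₂ = f₃·Y`, `P₄∇f₃ = 3a f₄·Y`, `P₄∇f₄ = a·Y`. -/
theorem lagrange_P4 (a : ℝ) (x : Fin 6 → ℝ) :
    (∀ i j, matLie (lagX a) (lagP₄ a) x i j = 0) ∧
    (∀ i j k, jacobiator (lagP₄ a) x i j k = 0) ∧
    (∀ i, Pgrad (lagP₄ a) lagF₁ x i = 2 * lagF₂ x * lagY x i) ∧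
    (∀ i, Pgrad (lagP₄ a) lagF₂ x i = lagF₃ a x * lagY x i) ∧
    (∀ i, Pgrad (lagP₄ a) (lagF₃ a) x i = 3 * a * lagF₄ x * lagY x i) ∧
    (∀ i, Pgrad (lagP₄ a) lagF₄ x i = a * lagY x i) :=
  ⟨matLie_lagX_lagP₄ a x, jacobiator_lagP₄ a x,
    fun i => (Pgrad_lagP₄_first_integrals a x i).1,
    fun i => (Pgrad_lagP₄_first_integrals a x i).2.1,
    fun i => (Pgrad_lagP₄_first_integrals a x i).2.2.1,
    fun i => (Pgrad_lagP₄_first_integrals a x i).2.2.2⟩
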